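/- Fix a discretization as in the context and let g(φ,s) = s for (φ,s) ∈ S. The exact backprojection satisfies (R* g)(x) = 2𝐲 for every x = (𝐱,𝐲) ∈ Ω, and for every i,j ∈ {0,…,N_x−1} with ‖x_ij‖ ≤ 1 − δ_s/2, writing x_ij = (𝐱_i, 𝐲_j), the pixel-driven backprojection error satisfies (R* g)(x_ij) − (R^pd* g)(x_ij) = −𝐱_i · Σ_{q=0}^{N_φ−1} |Φ_q| cos φ_q + 𝐲_j · (2 − Σ_{q=0}^{N_φ−1} |Φ_q| sin φ_q); that is, the error of the pixel-driven backprojection equals the error of the Riemann sums approximating the integrals ∫₀^π cos φ dφ = 0 and ∫₀^π sin φ dφ = 2. -/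

import Mathlib

open MeasureTheory Real Set Filter

/-- The ray-driven weight function `w^rd(φ, t)` (for spatial resolution `δx`).
Here `κ(φ) = min{1/|cos φ|, 1/|sin φ|}` (with `1/0 = ∞`) is expressed as
`1 / max |cos φ| |sin φ|`, which is the same real number. -/
noncomputable def rayWeight (δx φ t : ℝ) : ℝ :=
  (1 / δx) *
    (if δx / 2 * |(|Real.cos φ| - |Real.sin φ|)| ≤ |t| ∧
        |t| < δx / 2 * (|Real.cos φ| + |Real.sin φ|) then
      (δx / 2 * (|Real.cos φ| + |Real.sin φ|) - |t|) / (δx * |Real.cos φ * Real.sin φ|)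
    else if |t| < δx / 2 * |(|Real.cos φ| - |Real.sin φ|)| then
      1 / max |Real.cos φ| |Real.sin φ|
    else if (φ = 0 ∨ φ = Real.pi / 2) ∧ |t| = δx / 2 * (|Real.cos φ| + |Real.sin φ|) then
      1 / 2
    else 0)

/-- The pixel-driven weight function `w^pd(t)` (for detector resolution `δs`). -/
noncomputable def pixelWeight (δs t : ℝ) : ℝ := (1 / δs ^ 2) * max (δs - |t|) 0

/-- Spatial pixel center `x_ij` for an `Nx × Nx` grid on `[-1,1]²` (so `δ_x = 2/Nx`). -/
noncomputable def xc (Nx : ℕ) (i j : Fin Nx) : ℝ × ℝ :=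
  (((i : ℝ) + 1 / 2) * (2 / (Nx : ℝ)) - 1, ((j : ℝ) + 1 / 2) * (2 / (Nx : ℝ)) - 1)

/-- Spatial pixel `X_ij = x_ij + [-δ_x/2, δ_x/2]²`. -/
noncomputable def Xpix (Nx : ℕ) (i j : Fin Nx) : Set (ℝ × ℝ) :=
  {y | |y.1 - (xc Nx i j).1| ≤ (2 / (Nx : ℝ)) / 2 ∧ |y.2 - (xc Nx i j).2| ≤ (2 / (Nx : ℝ)) / 2}

/-- Detector pixel center `s_p = (p + 1/2) δ_s - 1` with `δ_s = 2/Ns`. -/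
noncomputable def sc (Ns p : ℕ) : ℝ := ((p : ℝ) + 1 / 2) * (2 / (Ns : ℝ)) - 1

/-- Detector pixel `S_p = [s_p - δ_s/2, s_p + δ_s/2)`. -/
noncomputable def Spix (Ns : ℕ) (p : Fin Ns) : Set ℝ :=
  Set.Ico (sc Ns p - (2 / (Ns : ℝ)) / 2) (sc Ns p + (2 / (Ns : ℝ)) / 2)

/-- The successor angle `φ_{q+1}`, with the convention `φ_{N_φ} = φ_0 + π`. -/
noncomputable def angNext {Nφ : ℕ} (ang : Fin Nφ → ℝ) (q : Fin Nφ) : ℝ :=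
  if h : (q : ℕ) + 1 < Nφ then ang ⟨(q : ℕ) + 1, h⟩ else ang ⟨0, q.pos⟩ + Real.pi

/-- The predecessor angle `φ_{q-1}`, with the convention `φ_{-1} = φ_{N_φ-1} - π`. -/
noncomputable def angPrev {Nφ : ℕ} (ang : Fin Nφ → ℝ) (q : Fin Nφ) : ℝ :=
  if (q : ℕ) = 0 then ang ⟨Nφ - 1, Nat.sub_lt q.pos Nat.one_pos⟩ - Real.pi
  else ang ⟨(q : ℕ) - 1, lt_of_le_of_lt (Nat.sub_le _ _) q.isLt⟩

/-- Left endpoint `(φ_{q-1} + φ_q)/2` of the angular pixel `Φ_q`. -/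
noncomputable def phiLo {Nφ : ℕ} (ang : Fin Nφ → ℝ) (q : Fin Nφ) : ℝ :=
  (angPrev ang q + ang q) / 2

/-- Right endpoint `(φ_q + φ_{q+1})/2` of the angular pixel `Φ_q`. -/
noncomputable def phiHi {Nφ : ℕ} (ang : Fin Nφ → ℝ) (q : Fin Nφ) : ℝ :=
  (ang q + angNext ang q) / 2

/-- The length `|Φ_q|` of the angular pixel `Φ_q`. -/
noncomputable def phiLen {Nφ : ℕ} (ang : Fin Nφ → ℝ) (q : Fin Nφ) : ℝ :=
  phiHi ang q - phiLo ang q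

/-- The angular pixel `Φ_q = [(φ_{q-1}+φ_q)/2, (φ_q+φ_{q+1})/2)`, π-periodically
projected into `[0, π)`. -/
noncomputable def PhiSet {Nφ : ℕ} (ang : Fin Nφ → ℝ) (q : Fin Nφ) : Set ℝ :=
  {φ | φ ∈ Set.Ico 0 Real.pi ∧
    ∃ k : ℤ, φ + (k : ℝ) * Real.pi ∈ Set.Ico (phiLo ang q) (phiHi ang q)}

/-- `x · θ_φ`, the projection of the point `x` onto the detector direction `θ_φ`. -/
noncomputable def proj (x : ℝ × ℝ) (φ : ℝ) : ℝ := x.1 * Real.cos φ + x.2 * Real.sin φ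

/-- The spatial domain `Ω = B(0,1) ⊂ ℝ²`. -/
noncomputable def Omg : Set (ℝ × ℝ) := {x | x.1 ^ 2 + x.2 ^ 2 < 1}

/-- The sinogram domain `S = [0, π) × (-1, 1)`, with coordinates `(φ, s)`. -/
noncomputable def Sdom : Set (ℝ × ℝ) := Set.Ico 0 Real.pi ×ˢ Set.Ioo (-1 : ℝ) 1

/-- The convolutional Radon transform `R_ω` with weight function `ω`. -/
noncomputable def convRadon (Nx Ns : ℕ) {Nφ : ℕ} (ang : Fin Nφ → ℝ)
    (ω : ℝ → ℝ → ℝ) (f : ℝ × ℝ → ℝ) (y : ℝ × ℝ) : ℝ :=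
  ∑ q : Fin Nφ, ∑ p : Fin Ns,
    Set.indicator (PhiSet ang q ×ˢ Spix Ns p) (fun _ => (1 : ℝ)) y *
      ∑ i : Fin Nx, ∑ j : Fin Nx,
        ω (ang q) (proj (xc Nx i j) (ang q) - sc Ns (p : ℕ)) * ∫ x in Xpix Nx i j, f x

/-- The convolutional backprojection `R_ω^*` with weight function `ω`. -/
noncomputable def convBack (Nx Ns : ℕ) {Nφ : ℕ} (ang : Fin Nφ → ℝ)
    (ω : ℝ → ℝ → ℝ) (g : ℝ × ℝ → ℝ) (x : ℝ × ℝ) : ℝ :=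
  ∑ i : Fin Nx, ∑ j : Fin Nx,
    Set.indicator (Xpix Nx i j) (fun _ => (1 : ℝ)) x *
      ∑ q : Fin Nφ, ∑ p : Fin Ns,
        ω (ang q) (proj (xc Nx i j) (ang q) - sc Ns (p : ℕ)) *
          ∫ z in PhiSet ang q ×ˢ Spix Ns p, g z

/-- The Radon transform `(Rf)(φ,s) = ∫ f(s θ_φ + t θ_φ^⊥) dt`, as a function of
`y = (φ, s)`. -/
noncomputable def radonT (f : ℝ × ℝ → ℝ) (y : ℝ × ℝ) : ℝ :=
  ∫ t : ℝ, f (y.2 * Real.cos y.1 - t * Real.sin y.1, y.2 * Real.sin y.1 + t * Real.cos y.1)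

/-- The backprojection `(R^* g)(x) = ∫₀^π g(φ, x · θ_φ) dφ`. -/
noncomputable def radonAdj (g : ℝ × ℝ → ℝ) (x : ℝ × ℝ) : ℝ :=
  ∫ φ in (0 : ℝ)..Real.pi, g (φ, proj x φ)

/-!
The exact backprojection of `g(φ, s) = s` is `∫₀^π (𝐱 cos φ + 𝐲 sin φ) dφ = 2𝐲`. At a pixel
centre `x_ij` only the pixel `X_ij` contributes to the pixel-driven backprojection, and the
integral of `g` over `Φ_q × S_p` factors as `|Φ_q| δ_s s_p`. After rescaling by `δ_s`, the
weights `w^pd(t - s_p)` are hat functions at consecutive integers, which reproduce affine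
functions; since `|x_ij · θ_φ| ≤ ‖x_ij‖ ≤ s_{N_s-1}`, the detector sum collapses to
`|Φ_q| x_ij · θ_{φ_q}`. Hence the pixel-driven backprojection is the Riemann sum
`Σ_q |Φ_q| x_ij · θ_{φ_q}`. The angular pixel is an interval of length at most `π` wrapped
modulo `π` into `[0, π)`, so its measure is still its length.
-/

def wrapIco (p a b : ℝ) : Set ℝ := {φ | φ ∈ Ico 0 p ∧ ∃ k : ℤ, φ + k * p ∈ Ico a b}

theorem wrapIco_add_int_mul (p a b : ℝ) (m : ℤ) :
    wrapIco p (a + m * p) (b + m * p) = wrapIco p a b := by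
  ext φ
  refine and_congr_right fun _ => ⟨fun ⟨k, hk⟩ => ⟨k - m, ?_⟩, fun ⟨k, hk⟩ => ⟨k + m, ?_⟩⟩ <;>
  · rw [mem_Ico] at hk ⊢
    push_cast
    constructor <;> linarith

theorem wrapIco_of_mem_Ico {p a b : ℝ} (hp : 0 < p) (ha : a ∈ Ico 0 p) (hb : b ≤ a + p) :
    wrapIco p a b = Ico a (min b p) ∪ Ico 0 (b - p) := by
  ext φ
  simp only [wrapIco, mem_ofPred_eq, mem_union, mem_Ico, lt_min_iff] at ha ⊢
  constructor
  · rintro ⟨hφ, k, hk₁, hk₂⟩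
    have hk : k = 0 ∨ k = 1 := by
      have hk₀ : (-1 : ℝ) < k := by nlinarith
      have hk₂ : (k : ℝ) < 2 := by nlinarith
      have : -1 < k := by exact_mod_cast hk₀
      have : k < 2 := by exact_mod_cast hk₂
      omega
    rcases hk with rfl | rfl
    · left; push_cast at hk₁ hk₂; exact ⟨by linarith, by linarith, hφ.2⟩
    · right; push_cast at hk₁ hk₂; exact ⟨hφ.1, by linarith⟩
  · rintro (⟨h₁, h₂, h₃⟩ | ⟨h₁, h₂⟩)
    · exact ⟨⟨by linarith, h₃⟩, 0, by push_cast; constructor <;> linarith⟩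
    · exact ⟨⟨h₁, by linarith⟩, 1, by push_cast; constructor <;> linarith⟩

theorem volume_wrapIco {p a b : ℝ} (hp : 0 < p) (hab : a ≤ b) (hb : b ≤ a + p) :
    volume (wrapIco p a b) = ENNReal.ofReal (b - a) := by
  set m := toIcoDiv hp 0 a
  have ha : a + (-m : ℤ) * p ∈ Ico 0 p := by
    have := toIcoMod_mem_Ico hp 0 a
    rwa [← self_sub_toIcoDiv_zsmul, zsmul_eq_mul, zero_add, sub_eq_add_neg, ← neg_mul,
      ← Int.cast_neg] at this
  rw [← wrapIco_add_int_mul p a b (-m)]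
  set a' := a + (-m : ℤ) * p
  set b' := b + (-m : ℤ) * p
  have hab' : a' ≤ b' := by linarith
  have hb' : b' ≤ a' + p := by linarith
  have hba : b - a = b' - a' := by ring
  rw [wrapIco_of_mem_Ico hp ha hb', measure_union _ measurableSet_Ico, Real.volume_Ico,
    Real.volume_Ico, hba]
  · rcases le_total b' p with h | h
    · rw [min_eq_left h, ENNReal.ofReal_of_nonpos (by linarith : b' - p - 0 ≤ 0), add_zero]
    · rw [min_eq_right h, ← ENNReal.ofReal_add (by linarith [ha.2]) (by linarith)]
      ring_nf
  · rw [Set.disjoint_left]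
    rintro φ ⟨h₁, -⟩ ⟨-, h₂⟩
    linarith

section Angles

variable {Nφ : ℕ} {ang : Fin Nφ → ℝ}

theorem ang_lt_angNext (hmono : StrictMono ang) (hang : ∀ q, ang q ∈ Ico 0 π) (q : Fin Nφ) :
    ang q < angNext ang q := by
  unfold angNext
  split_ifs with h
  · exact hmono (Fin.lt_def.mpr (Nat.lt_add_one _))
  · linarith [(hang q).2, (hang ⟨0, q.pos⟩).1]

theorem angNext_le_add_pi (hmono : StrictMono ang) (hang : ∀ q, ang q ∈ Ico 0 π) (q : Fin Nφ) :
    angNext ang q ≤ ang q + π := by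
  unfold angNext
  split_ifs with h
  · linarith [(hang ⟨q + 1, h⟩).2, (hang q).1]
  · linarith [hmono.monotone (Fin.le_def.mpr (Nat.zero_le _) : (⟨0, q.pos⟩ : Fin Nφ) ≤ q)]

theorem angPrev_lt_ang (hmono : StrictMono ang) (hang : ∀ q, ang q ∈ Ico 0 π) (q : Fin Nφ) :
    angPrev ang q < ang q := by
  unfold angPrev
  split_ifs with h
  · linarith [(hang q).1, (hang ⟨Nφ - 1, Nat.sub_lt q.pos Nat.one_pos⟩).2]
  · exact hmono (Fin.lt_def.mpr (by dsimp only; omega))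

theorem sub_pi_le_angPrev (hmono : StrictMono ang) (hang : ∀ q, ang q ∈ Ico 0 π) (q : Fin Nφ) :
    ang q - π ≤ angPrev ang q := by
  unfold angPrev
  split_ifs with h
  · have hlast : q ≤ ⟨Nφ - 1, Nat.sub_lt q.pos Nat.one_pos⟩ := Fin.le_def.mpr (by dsimp only; omega)
    linarith [hmono.monotone hlast]
  · linarith [(hang q).2, (hang ⟨q - 1, lt_of_le_of_lt (Nat.sub_le _ _) q.isLt⟩).1]

theorem phiLo_le_phiHi (hmono : StrictMono ang) (hang : ∀ q, ang q ∈ Ico 0 π) (q : Fin Nφ) :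
    phiLo ang q ≤ phiHi ang q := by
  unfold phiLo phiHi
  linarith [ang_lt_angNext hmono hang q, angPrev_lt_ang hmono hang q]

theorem phiHi_le_phiLo_add_pi (hmono : StrictMono ang) (hang : ∀ q, ang q ∈ Ico 0 π)
    (q : Fin Nφ) : phiHi ang q ≤ phiLo ang q + π := by
  unfold phiLo phiHi
  linarith [angNext_le_add_pi hmono hang q, sub_pi_le_angPrev hmono hang q]

theorem measureReal_PhiSet (hmono : StrictMono ang) (hang : ∀ q, ang q ∈ Ico 0 π) (q : Fin Nφ) :
    volume.real (PhiSet ang q) = phiLen ang q := by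
  have hlo := phiLo_le_phiHi hmono hang q
  rw [measureReal_def, show PhiSet ang q = wrapIco π (phiLo ang q) (phiHi ang q) from rfl,
    volume_wrapIco pi_pos hlo (phiHi_le_phiLo_add_pi hmono hang q),
    ENNReal.toReal_ofReal (sub_nonneg.mpr hlo), phiLen]

end Angles

def hat (u : ℝ) : ℝ := max (1 - |u|) 0

theorem hat_eq_zero {u : ℝ} (hu : 1 ≤ |u|) : hat u = 0 :=
  max_eq_right (by linarith)

theorem pixelWeight_eq_hat {δ : ℝ} (hδ : 0 < δ) (u : ℝ) : pixelWeight δ u = hat (u / δ) / δ := by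
  rw [pixelWeight, hat, abs_div, abs_of_pos hδ]
  rcases le_total |u| δ with h | h
  · rw [max_eq_left (by linarith), max_eq_left (by rwa [sub_nonneg, div_le_one hδ])]
    field_simp
  · rw [max_eq_right (by linarith), max_eq_right (by rwa [sub_nonpos, one_le_div hδ])]
    simp

theorem sum_range_hat_mul_affine (a b : ℝ) (n : ℕ) {t : ℝ} (ht₀ : 0 ≤ t) (htn : t ≤ n) :
    ∑ k ∈ Finset.range (n + 1), hat (t - k) * (a + b * k) = a + b * t := by
  induction n generalizing t with
  | zero =>
    obtain rfl : t = 0 := le_antisymm (by simpa using htn) ht₀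
    simp [hat]
  | succ n ih =>
    rw [Finset.sum_range_succ]
    rcases le_or_gt t n with h | h
    · rw [ih ht₀ h, hat_eq_zero, zero_mul, add_zero]
      rw [abs_of_nonpos (by push_cast; linarith)]
      push_cast
      linarith
    · rw [Finset.sum_range_succ, Finset.sum_eq_zero, hat, hat, abs_of_nonneg (by linarith),
        abs_of_nonpos (by push_cast at htn ⊢; linarith),
        max_eq_left (by push_cast at htn ⊢; linarith), max_eq_left (by push_cast; linarith)]
      · push_cast; ring
      · intro k hk
        have hk : (k : ℝ) + 1 ≤ n := by exact_mod_cast Finset.mem_range.mp hk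
        rw [hat_eq_zero (by rw [abs_of_nonneg (by linarith)]; linarith), zero_mul]

theorem sum_pixelWeight_mul_sc {Ns : ℕ} (hNs : 0 < Ns) {t : ℝ} (ht : |t| ≤ 1 - 2 / (Ns : ℝ) / 2) :
    ∑ p : Fin Ns, pixelWeight (2 / (Ns : ℝ)) (t - sc Ns p) * (2 / (Ns : ℝ) * sc Ns p) = t := by
  set δ : ℝ := 2 / Ns with hδ_def
  have hδ : 0 < δ := by positivity
  obtain ⟨n, rfl⟩ : ∃ n, Ns = n + 1 := ⟨Ns - 1, by omega⟩
  have hnδ : (n : ℝ) * δ = 2 - δ := by rw [hδ_def]; push_cast; field_simp; ring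
  obtain ⟨ht₀, ht₁⟩ := abs_le.mp ht
  have key := sum_range_hat_mul_affine (-1 + δ / 2) δ n (t := (t + 1 - δ / 2) / δ)
    (div_nonneg (by linarith) hδ.le) (by rw [div_le_iff₀ hδ]; linarith)
  rw [Fin.sum_univ_eq_sum_range (fun p => pixelWeight δ (t - sc _ p) * (δ * sc _ p))]
  calc ∑ k ∈ Finset.range (n + 1), pixelWeight δ (t - sc (n + 1) k) * (δ * sc (n + 1) k)
      = ∑ k ∈ Finset.range (n + 1), hat ((t + 1 - δ / 2) / δ - k) * (-1 + δ / 2 + δ * k) := by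
        refine Finset.sum_congr rfl fun k _ => ?_
        have hsc : sc (n + 1) k = -1 + δ / 2 + δ * k := by rw [sc, hδ_def]; ring
        have harg : (t - (-1 + δ / 2 + δ * k)) / δ = (t + 1 - δ / 2) / δ - k := by
          field_simp
          ring
        rw [pixelWeight_eq_hat hδ, hsc, harg]
        field_simp
    _ = t := by
        rw [key]
        field_simp
        ring

theorem integral_Ico_id {a b : ℝ} (hab : a ≤ b) : ∫ s in Ico a b, s = (b ^ 2 - a ^ 2) / 2 := by
  rw [integral_Ico_eq_integral_Ioo, ← integral_Ioc_eq_integral_Ioo,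
    ← intervalIntegral.integral_of_le hab, integral_id]

theorem integral_Spix (Ns : ℕ) (p : Fin Ns) : ∫ s in Spix Ns p, s = 2 / (Ns : ℝ) * sc Ns p := by
  have : (0 : ℝ) ≤ 2 / Ns := by positivity
  rw [Spix, integral_Ico_id (by linarith)]
  ring

theorem setIntegral_prod_snd (A B : Set ℝ) :
    ∫ z in A ×ˢ B, z.2 = volume.real A * ∫ s in B, s := by
  rw [Measure.volume_eq_prod]
  simpa using setIntegral_prod_mul (μ := volume) (ν := volume) (fun _ => (1 : ℝ)) id A B

theorem abs_proj_le (x : ℝ × ℝ) (φ : ℝ) : |proj x φ| ≤ √(x.1 ^ 2 + x.2 ^ 2) := by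
  rw [proj, ← Real.sqrt_sq_eq_abs]
  apply Real.sqrt_le_sqrt
  nlinarith [sin_sq_add_cos_sq φ, sq_nonneg (x.1 * sin φ - x.2 * cos φ)]

theorem radonAdj_snd (x : ℝ × ℝ) : radonAdj (fun y => y.2) x = 2 * x.2 := by
  simp only [radonAdj, proj]
  rw [intervalIntegral.integral_add (f := fun φ => x.1 * cos φ) (g := fun φ => x.2 * sin φ)
      ((continuous_const.mul continuous_cos).intervalIntegrable _ _)
      ((continuous_const.mul continuous_sin).intervalIntegrable _ _),
    intervalIntegral.integral_const_mul, intervalIntegral.integral_const_mul, integral_cos,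
    integral_sin]
  simp only [sin_pi, sin_zero, sub_self, mul_zero, cos_zero, cos_pi, sub_neg_eq_add, zero_add]
  ring

theorem abs_sub_grid_le_iff {δ : ℝ} (hδ : 0 < δ) (m n : ℕ) :
    |((m + 1 / 2) * δ - 1) - ((n + 1 / 2) * δ - 1)| ≤ δ / 2 ↔ m = n := by
  rw [show ((m + 1 / 2) * δ - 1) - ((n + 1 / 2) * δ - 1) = ((m : ℝ) - n) * δ by ring, abs_mul,
    abs_of_pos hδ, abs_sub_comm]
  constructor
  · intro h
    obtain ⟨h₁, h₂⟩ := abs_le.mp (le_of_mul_le_mul_right (by linarith) hδ : |(n : ℝ) - m| ≤ 1 / 2)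
    have : m < n + 1 := by exact_mod_cast (by linarith : (m : ℝ) < n + 1)
    have : n < m + 1 := by exact_mod_cast (by linarith : (n : ℝ) < m + 1)
    omega
  · rintro rfl
    simp only [sub_self, abs_zero, zero_mul]
    positivity

theorem xc_mem_Xpix_iff {Nx : ℕ} (i j i' j' : Fin Nx) :
    xc Nx i j ∈ Xpix Nx i' j' ↔ i = i' ∧ j = j' := by
  have hδ : (0 : ℝ) < 2 / Nx := by have := i.pos; positivity
  simp only [Xpix, xc, mem_ofPred_eq, abs_sub_grid_le_iff hδ, Fin.val_inj]

theorem convBack_xc {Nx Ns Nφ : ℕ} (ang : Fin Nφ → ℝ) (ω : ℝ → ℝ → ℝ) (g : ℝ × ℝ → ℝ)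
    (i j : Fin Nx) :
    convBack Nx Ns ang ω g (xc Nx i j) = ∑ q, ∑ p : Fin Ns,
      ω (ang q) (proj (xc Nx i j) (ang q) - sc Ns p) * ∫ z in PhiSet ang q ×ˢ Spix Ns p, g z := by
  rw [convBack, Fintype.sum_eq_single i, Fintype.sum_eq_single j]
  · rw [indicator_of_mem ((xc_mem_Xpix_iff i j i j).mpr ⟨rfl, rfl⟩), one_mul]
  · intro j' hj
    rw [indicator_of_notMem fun h => hj ((xc_mem_Xpix_iff i j i j').mp h).2.symm, zero_mul]
  · intro i' hi
    refine Finset.sum_eq_zero fun j' _ => ?_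
    rw [indicator_of_notMem fun h => hi ((xc_mem_Xpix_iff i j i' j').mp h).1.symm, zero_mul]

theorem convBack_pixelWeight_snd_xc {Nx Ns Nφ : ℕ} (hNs : 0 < Ns) {ang : Fin Nφ → ℝ}
    (hmono : StrictMono ang) (hang : ∀ q, ang q ∈ Ico 0 π) (i j : Fin Nx)
    (hproj : ∀ q, |proj (xc Nx i j) (ang q)| ≤ 1 - 2 / (Ns : ℝ) / 2) :
    convBack Nx Ns ang (fun _ t => pixelWeight (2 / (Ns : ℝ)) t) (fun y => y.2) (xc Nx i j) =
      ∑ q, phiLen ang q * proj (xc Nx i j) (ang q) := by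
  rw [convBack_xc]
  refine Finset.sum_congr rfl fun q _ => ?_
  simp_rw [setIntegral_prod_snd, integral_Spix, measureReal_PhiSet hmono hang,
    mul_left_comm _ (phiLen ang q), ← Finset.mul_sum, sum_pixelWeight_mul_sc hNs (hproj q)]

theorem sum_mul_proj {ι : Type*} (s : Finset ι) (c φ : ι → ℝ) (x : ℝ × ℝ) :
    ∑ q ∈ s, c q * proj x (φ q) =
      x.1 * ∑ q ∈ s, c q * cos (φ q) + x.2 * ∑ q ∈ s, c q * sin (φ q) := by
  simp only [proj, Finset.mul_sum, ← Finset.sum_add_distrib]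
  exact Finset.sum_congr rfl fun q _ => by ring

theorem stmt14_general (Nx Nφ Ns : ℕ) (hNs : 0 < Ns)
    (ang : Fin Nφ → ℝ) (hmono : StrictMono ang) (hang : ∀ q, ang q ∈ Set.Ico 0 Real.pi) :
    (∀ x ∈ Omg, radonAdj (fun y => y.2) x = 2 * x.2)
    ∧ (∀ i j : Fin Nx,
        Real.sqrt ((xc Nx i j).1 ^ 2 + (xc Nx i j).2 ^ 2) ≤ 1 - (2 / (Ns : ℝ)) / 2 →
        radonAdj (fun y => y.2) (xc Nx i j) -
            convBack Nx Ns ang (fun _ t => pixelWeight (2 / (Ns : ℝ)) t)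
              (fun y => y.2) (xc Nx i j)
          = -(xc Nx i j).1 * (∑ q : Fin Nφ, phiLen ang q * Real.cos (ang q)) +
            (xc Nx i j).2 * (2 - ∑ q : Fin Nφ, phiLen ang q * Real.sin (ang q))) := by
  refine ⟨fun x _ => radonAdj_snd x, fun i j hij => ?_⟩
  rw [radonAdj_snd, convBack_pixelWeight_snd_xc hNs hmono hang i j
    fun q => (abs_proj_le _ _).trans hij, sum_mul_proj]
  ring

/-- For a fixed discretization and the sinogram `g(φ,s) = s`: the exact
backprojection satisfies `(R^* g)(x) = 2𝐲` for every `x = (𝐱,𝐲) ∈ Ω`, and for every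
`i, j` with `‖x_ij‖ ≤ 1 - δ_s/2`, writing `x_ij = (𝐱_i, 𝐲_j)`, the pixel-driven
backprojection error satisfies `(R^* g)(x_ij) - (R^pd* g)(x_ij)
= -𝐱_i · Σ_q |Φ_q| cos φ_q + 𝐲_j · (2 - Σ_q |Φ_q| sin φ_q)`. -/
theorem stmt14 (Nx Nφ Ns : ℕ) (hNx : 0 < Nx) (hNφ : 0 < Nφ) (hNs : 0 < Ns)
    (ang : Fin Nφ → ℝ) (hmono : StrictMono ang) (hang : ∀ q, ang q ∈ Set.Ico 0 Real.pi) :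
    (∀ x ∈ Omg, radonAdj (fun y => y.2) x = 2 * x.2)
    ∧ (∀ i j : Fin Nx,
        Real.sqrt ((xc Nx i j).1 ^ 2 + (xc Nx i j).2 ^ 2) ≤ 1 - (2 / (Ns : ℝ)) / 2 →
        radonAdj (fun y => y.2) (xc Nx i j) -
            convBack Nx Ns ang (fun _ t => pixelWeight (2 / (Ns : ℝ)) t)
              (fun y => y.2) (xc Nx i j)
          = -(xc Nx i j).1 * (∑ q : Fin Nφ, phiLen ang q * Real.cos (ang q)) +
            (xc Nx i j).2 * (2 - ∑ q : Fin Nφ, phiLen ang q * Real.sin (ang q))) :=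
  stmt14_general Nx Nφ Ns hNs ang hmono hang
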